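/- (Graph Laplacian regularizer identity for H̄) For every α ∈ ℝ^{N+2}, αᵀ H̄ α = ∑_{1 ≤ i < j ≤ N} W_{i,j} (α_i − α_j)² − ∑_{i=1}^{M₁} z_i (α_{N+1} − α_i)² − ∑_{i=M₁+1}^{M} z_i (α_{N+2} − α_i)² + ∑_{i=1}^{N} u_i α_i² + u_{N+1} α_{N+2}², where the self-loop weights are u_i = y_i + z_i for 1 ≤ i ≤ M, u_i = y_i for M < i ≤ N, and u_{N+1} = y_{N+1} + ∑_{j=1}^{M} z_j. -/

import Mathlib

open Matrix

/-- The `(N+1)×(N+1)` dual matrix `H` (0-based indices: rows/cols `0,…,N-1` are the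
graph nodes, index `N` is node `N+1`): `H_{ij} = L_{ij}` off-diagonal for `i,j < N`,
`H_{ii} = y_i + L_{ii}` for `i < N`, `H_{i,N} = H_{N,i} = z_i` for `i < M` and `0`
for `M ≤ i < N`, and `H_{N,N} = y_N`. -/
def Hmat (N M : ℕ) (L : Matrix (Fin N) (Fin N) ℝ)
    (y : Fin (N + 1) → ℝ) (z : Fin M → ℝ) :
    Matrix (Fin (N + 1)) (Fin (N + 1)) ℝ :=
  Matrix.of fun i j =>
    if hi : (i : ℕ) < N then
      if hj : (j : ℕ) < N then
        (if i = j then y i else 0) + L ⟨i, hi⟩ ⟨j, hj⟩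
      else
        if h : (i : ℕ) < M then z ⟨i, h⟩ else 0
    else
      if hj : (j : ℕ) < N then
        if h : (j : ℕ) < M then z ⟨j, h⟩ else 0
      else y i

/-- The augmented `(N+2)×(N+2)` matrix `H̄` (0-based: index `N` is node `N+1`,
index `N+1` is node `N+2`). -/
def Hbar (N M M₁ : ℕ) (hM₁M : M₁ < M)
    (L : Matrix (Fin N) (Fin N) ℝ) (y : Fin (N + 1) → ℝ) (z : Fin M → ℝ) :
    Matrix (Fin (N + 2)) (Fin (N + 2)) ℝ :=
  Matrix.of fun i j =>
    if hi : (i : ℕ) < N then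
      if hj : (j : ℕ) < N then
        (if i = j then y ⟨i, by omega⟩ else 0) + L ⟨i, hi⟩ ⟨j, hj⟩
      else if (j : ℕ) = N then
        if h : (i : ℕ) < M₁ then z ⟨i, by omega⟩ else 0
      else
        if h : M₁ ≤ (i : ℕ) ∧ (i : ℕ) < M then z ⟨i, h.2⟩ else 0
    else if hi' : (i : ℕ) = N then
      if hj : (j : ℕ) < N then
        if h : (j : ℕ) < M₁ then z ⟨j, by omega⟩ else 0
      else if (j : ℕ) = N then -(∑ k : Fin M, if (k : ℕ) < M₁ then z k else 0)
      else 0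
    else
      if hj : (j : ℕ) < N then
        if h : M₁ ≤ (j : ℕ) ∧ (j : ℕ) < M then z ⟨j, h.2⟩ else 0
      else if (j : ℕ) = N then 0
      else y (Fin.last N) + ∑ k : Fin M, if (k : ℕ) < M₁ then z k else 0

/-- The combinatorial graph Laplacian `L = D − W`, where `D` is the diagonal degree
matrix with `D_{ii} = ∑_j W_{ij}`. -/
def lapl (N : ℕ) (W : Matrix (Fin N) (Fin N) ℝ) : Matrix (Fin N) (Fin N) ℝ :=
  Matrix.of fun i j => (if i = j then ∑ k, W i k else 0) - W i j


section GLRaux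

lemma sum_sym_double {n : ℕ} (f : Fin n → Fin n → ℝ)
    (hsymm : ∀ i j, f i j = f j i) (hdiag : ∀ i, f i i = 0) :
    ∑ i, ∑ j, f i j = 2 * ∑ i, ∑ j, (if i < j then f i j else 0) := by
  have h1 : ∀ i j : Fin n, f i j =
      (if i < j then f i j else 0) + (if j < i then f i j else 0) := by
    intro i j
    rcases lt_trichotomy i j with h | h | h
    · simp [h, not_lt_of_gt h]
    · simp [h, hdiag]
    · simp [h, not_lt_of_gt h]
  have h2 : (∑ i, ∑ j, (if j < i then f i j else 0))
      = ∑ i, ∑ j, (if i < j then f i j else 0) := by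
    rw [Finset.sum_comm]
    congr 1; ext i; congr 1; ext j
    exact if_congr Iff.rfl (hsymm _ _) rfl
  calc ∑ i, ∑ j, f i j
      = ∑ i, ∑ j, ((if i < j then f i j else 0) + (if j < i then f i j else 0)) := by
        simp_rw [← h1]
    _ = (∑ i, ∑ j, (if i < j then f i j else 0))
        + ∑ i, ∑ j, (if j < i then f i j else 0) := by
        simp_rw [Finset.sum_add_distrib]
    _ = 2 * ∑ i, ∑ j, (if i < j then f i j else 0) := by rw [h2]; ring

lemma lapl_quadform {N : ℕ} (W : Matrix (Fin N) (Fin N) ℝ)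
    (hW : W.IsSymm) (hWdiag : ∀ i, W i i = 0) (β : Fin N → ℝ) :
    ∑ i, ∑ j, β i * lapl N W i j * β j
      = ∑ i, ∑ j, (if i < j then W i j * (β i - β j) ^ 2 else 0) := by
  have hWs : ∀ i j, W i j = W j i := fun i j => (congrFun (congrFun hW j) i : _)
  have key : ∑ i, ∑ j, W i j * (β i - β j) ^ 2
      = 2 * ∑ i, ∑ j, (if i < j then W i j * (β i - β j) ^ 2 else 0) := by
    have := sum_sym_double (fun i j => W i j * (β i - β j) ^ 2)
      (fun i j => by rw [hWs i j]; ring)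
      (fun i => by simp [hWdiag])
    simpa using this
  have hL : ∑ i, ∑ j, β i * lapl N W i j * β j
      = (∑ i, ∑ j, W i j * β i ^ 2) - ∑ i, ∑ j, W i j * (β i * β j) := by
    have expand : ∀ i j : Fin N, β i * lapl N W i j * β j
        = (if i = j then (∑ k, W i k) * (β i * β j) else 0) - W i j * (β i * β j) := by
      intro i j
      simp only [lapl, Matrix.of_apply]
      rcases eq_or_ne i j with h | h
      · subst h; rw [if_pos rfl, if_pos rfl]; ring
      · simp [h]; ring
    simp_rw [expand, Finset.sum_sub_distrib, Finset.sum_ite_eq, Finset.mem_univ, if_true]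
    congr 1
    congr 1; ext i
    rw [Finset.sum_mul]
    congr 1; ext j
    ring
  have e2 : (∑ i, ∑ j, W i j * β j ^ 2) = ∑ i, ∑ j, W i j * β i ^ 2 := by
    rw [Finset.sum_comm]
    congr 1; ext i; congr 1; ext j; rw [hWs i j]
  have hR : ∑ i, ∑ j, W i j * (β i - β j) ^ 2
      = 2 * (∑ i, ∑ j, W i j * β i ^ 2) - 2 * ∑ i, ∑ j, W i j * (β i * β j) := by
    have expand : ∀ i j : Fin N, W i j * (β i - β j) ^ 2
        = W i j * β i ^ 2 + W i j * β j ^ 2 - 2 * (W i j * (β i * β j)) := by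
      intro i j; ring
    simp_rw [expand, Finset.sum_sub_distrib, Finset.sum_add_distrib, e2,
      ← Finset.mul_sum]
    ring
  linarith [key, hL, hR]

lemma sum_castLE {M N : ℕ} (hMN : M ≤ N) (f : Fin N → ℝ)
    (hf : ∀ i : Fin N, M ≤ (i : ℕ) → f i = 0) :
    ∑ i : Fin N, f i = ∑ i : Fin M, f (Fin.castLE hMN i) := by
  classical
  set g : ℕ → ℝ := fun k => if h : k < N then f ⟨k, h⟩ else 0 with hg
  have h1 : ∑ i : Fin N, f i = ∑ i : Fin N, g (i : ℕ) := by
    congr 1; ext i; simp [hg, i.isLt]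
  have h2 : ∑ i : Fin M, f (Fin.castLE hMN i) = ∑ i : Fin M, g (i : ℕ) := by
    congr 1; ext i
    have hi : (i : ℕ) < N := lt_of_lt_of_le i.isLt hMN
    simp [hg, hi]
    rfl
  rw [h1, h2, Fin.sum_univ_eq_sum_range, Fin.sum_univ_eq_sum_range]
  refine (Finset.sum_subset (Finset.range_subset_range.2 hMN) ?_).symm
  intro k hk hk'
  simp only [Finset.mem_range] at hk hk'
  simp only [hg]
  rw [dif_pos hk]
  exact hf ⟨k, hk⟩ (le_of_not_gt hk')

variable {N M M₁ : ℕ} (hM₁M : M₁ < M) (L : Matrix (Fin N) (Fin N) ℝ)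
  (y : Fin (N + 1) → ℝ) (z : Fin M → ℝ)

lemma Hbar_AA (i j : Fin N) :
    Hbar N M M₁ hM₁M L y z i.castSucc.castSucc j.castSucc.castSucc
      = (if i = j then y i.castSucc else 0) + L i j := by
  simp [Hbar, Fin.is_lt, Fin.castSucc_inj, Fin.castSucc]
  exact if_congr Iff.rfl rfl rfl

lemma Hbar_AB (i : Fin N) :
    Hbar N M M₁ hM₁M L y z i.castSucc.castSucc (Fin.last N).castSucc
      = if h : (i : ℕ) < M₁ then z ⟨i, h.trans hM₁M⟩ else 0 := by
  simp [Hbar, Fin.is_lt, Fin.castSucc, Fin.last]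

lemma Hbar_BA (i : Fin N) :
    Hbar N M M₁ hM₁M L y z (Fin.last N).castSucc i.castSucc.castSucc
      = if h : (i : ℕ) < M₁ then z ⟨i, h.trans hM₁M⟩ else 0 := by
  simp [Hbar, Fin.is_lt, Fin.castSucc, Fin.last]

lemma Hbar_AC (i : Fin N) :
    Hbar N M M₁ hM₁M L y z i.castSucc.castSucc (Fin.last (N + 1))
      = if h : M₁ ≤ (i : ℕ) ∧ (i : ℕ) < M then z ⟨i, h.2⟩ else 0 := by
  simp [Hbar, Fin.is_lt, Fin.castSucc, Fin.last]

lemma Hbar_CA (i : Fin N) :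
    Hbar N M M₁ hM₁M L y z (Fin.last (N + 1)) i.castSucc.castSucc
      = if h : M₁ ≤ (i : ℕ) ∧ (i : ℕ) < M then z ⟨i, h.2⟩ else 0 := by
  simp [Hbar, Fin.is_lt, Fin.castSucc, Fin.last]

lemma Hbar_BB :
    Hbar N M M₁ hM₁M L y z (Fin.last N).castSucc (Fin.last N).castSucc
      = -(∑ k : Fin M, if (k : ℕ) < M₁ then z k else 0) := by
  simp [Hbar, Fin.castSucc, Fin.last]

lemma Hbar_BC :
    Hbar N M M₁ hM₁M L y z (Fin.last N).castSucc (Fin.last (N + 1)) = 0 := by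
  simp [Hbar, Fin.castSucc, Fin.last]

lemma Hbar_CB :
    Hbar N M M₁ hM₁M L y z (Fin.last (N + 1)) (Fin.last N).castSucc = 0 := by
  simp [Hbar, Fin.castSucc, Fin.last]

lemma Hbar_CC :
    Hbar N M M₁ hM₁M L y z (Fin.last (N + 1)) (Fin.last (N + 1))
      = y (Fin.last N) + ∑ k : Fin M, if (k : ℕ) < M₁ then z k else 0 := by
  simp [Hbar, Fin.castSucc, Fin.last]

end GLRaux

/-- GLR identity for `H̄`: for every `α ∈ ℝ^{N+2}`,
`αᵀ H̄ α = ∑_{i<j≤N} W_{ij}(α_i−α_j)² − ∑_{i=1}^{M₁} z_i (α_{N+1}−α_i)²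
           − ∑_{i=M₁+1}^{M} z_i (α_{N+2}−α_i)²
           + ∑_{i=1}^{N} u_i α_i² + u_{N+1} α_{N+2}²`,
where `u_i = y_i + z_i` for `i ≤ M`, `u_i = y_i` for `M < i ≤ N`, and
`u_{N+1} = y_{N+1} + ∑_{j=1}^{M} z_j`. -/
theorem glr_identity_Hbar (N M M₁ : ℕ)
    (hM₁ : 1 ≤ M₁) (hM₁M : M₁ < M) (hMN : M ≤ N)
    (W : Matrix (Fin N) (Fin N) ℝ) (hW : W.IsSymm) (hWdiag : ∀ i, W i i = 0)
    (y : Fin (N + 1) → ℝ) (z : Fin M → ℝ)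
    (u : Fin (N + 1) → ℝ)
    (hu1 : ∀ (i : Fin (N + 1)) (h : (i : ℕ) < M), u i = y i + z ⟨i, h⟩)
    (hu2 : ∀ i : Fin (N + 1), M ≤ (i : ℕ) → (i : ℕ) < N → u i = y i)
    (hu3 : u (Fin.last N) = y (Fin.last N) + ∑ j, z j)
    (α : Fin (N + 2) → ℝ) :
    α ⬝ᵥ (Hbar N M M₁ hM₁M (lapl N W) y z).mulVec α
      = (∑ i : Fin N, ∑ j : Fin N,
          if i < j then
            W i j * (α (Fin.castLE (by omega) i) - α (Fin.castLE (by omega) j)) ^ 2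
          else 0)
        - (∑ i : Fin M, if (i : ℕ) < M₁ then
            z i * (α ⟨N, by omega⟩ - α (Fin.castLE (by omega) i)) ^ 2 else 0)
        - (∑ i : Fin M, if M₁ ≤ (i : ℕ) then
            z i * (α (Fin.last (N + 1)) - α (Fin.castLE (by omega) i)) ^ 2 else 0)
        + (∑ i : Fin N, u i.castSucc * α (Fin.castLE (by omega) i) ^ 2)
        + u (Fin.last N) * α (Fin.last (N + 1)) ^ 2 := by
  classical
  have h : α ⬝ᵥ (Hbar N M M₁ hM₁M (lapl N W) y z).mulVec α
      = ∑ i : Fin (N+2), ∑ j : Fin (N+2),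
          α i * (Hbar N M M₁ hM₁M (lapl N W) y z i j * α j) := by
    simp [dotProduct, mulVec, Finset.mul_sum]
  rw [h]
  simp only [Fin.sum_univ_castSucc]
  simp only [Hbar_AA, Hbar_AB, Hbar_AC, Hbar_BA, Hbar_BB, Hbar_BC, Hbar_CA, Hbar_CB, Hbar_CC]
  have hcast : ∀ i : Fin N, α (Fin.castLE (show N ≤ N + 2 by omega) i)
      = α i.castSucc.castSucc := fun i => rfl
  have hcast2 : α (⟨N, show N < N + 2 by omega⟩ : Fin (N + 2))
      = α ((Fin.last N).castSucc) := rfl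
  have hcastM : ∀ i : Fin M, α (Fin.castLE (show M ≤ N + 2 by omega) i)
      = α ((Fin.castLE hMN i).castSucc.castSucc) := fun i => rfl
  simp only [hcast, hcast2, hcastM]
  -- abbreviations (proved pointwise facts)
  have hsplit : ∀ i : Fin N, (if h : (i : ℕ) < M then z ⟨i, h⟩ else 0)
      = (if h : (i : ℕ) < M₁ then z ⟨i, h.trans hM₁M⟩ else 0)
        + (if h : M₁ ≤ (i : ℕ) ∧ (i : ℕ) < M then z ⟨i, h.2⟩ else 0) := by
    intro i
    by_cases h1 : (i : ℕ) < M₁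
    · rw [dif_pos (h1.trans hM₁M), dif_pos h1, dif_neg (by omega)]
      ring
    · by_cases h2 : (i : ℕ) < M
      · rw [dif_pos h2, dif_neg h1, dif_pos ⟨by omega, h2⟩]
        ring
      · rw [dif_neg h2, dif_neg h1, dif_neg (by omega)]
        ring
  -- convert `Fin M` sums to `Fin N` sums
  have cS : (∑ k : Fin M, if (k : ℕ) < M₁ then z k else 0)
      = ∑ i : Fin N, (if h : (i : ℕ) < M₁ then z ⟨i, h.trans hM₁M⟩ else 0) := by
    rw [sum_castLE hMN (fun i => if h : (i : ℕ) < M₁ then z ⟨i, h.trans hM₁M⟩ else 0)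
      (fun i hi => dif_neg (by omega))]
    refine Finset.sum_congr rfl fun k _ => ?_
    by_cases h : (k : ℕ) < M₁ <;> simp [h]
  have cZ1 : (∑ x : Fin M, if (x : ℕ) < M₁ then
        z x * (α (Fin.last N).castSucc - α (Fin.castLE hMN x).castSucc.castSucc) ^ 2 else 0)
      = ∑ i : Fin N, (if h : (i : ℕ) < M₁ then z ⟨i, h.trans hM₁M⟩ else 0)
          * (α (Fin.last N).castSucc - α i.castSucc.castSucc) ^ 2 := by
    rw [sum_castLE hMN (fun i => (if h : (i : ℕ) < M₁ then z ⟨i, h.trans hM₁M⟩ else 0)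
        * (α (Fin.last N).castSucc - α i.castSucc.castSucc) ^ 2)
      (fun i hi => by simp only [dif_neg (show ¬ (i : ℕ) < M₁ by omega), zero_mul])]
    refine Finset.sum_congr rfl fun k _ => ?_
    by_cases h : (k : ℕ) < M₁ <;> simp [h]
  have cZ2 : (∑ x : Fin M, if M₁ ≤ (x : ℕ) then
        z x * (α (Fin.last (N + 1)) - α (Fin.castLE hMN x).castSucc.castSucc) ^ 2 else 0)
      = ∑ i : Fin N, (if h : M₁ ≤ (i : ℕ) ∧ (i : ℕ) < M then z ⟨i, h.2⟩ else 0)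
          * (α (Fin.last (N + 1)) - α i.castSucc.castSucc) ^ 2 := by
    rw [sum_castLE hMN (fun i => (if h : M₁ ≤ (i : ℕ) ∧ (i : ℕ) < M then z ⟨i, h.2⟩ else 0)
        * (α (Fin.last (N + 1)) - α i.castSucc.castSucc) ^ 2)
      (fun i hi => by
        simp only [dif_neg (show ¬ (M₁ ≤ (i : ℕ) ∧ (i : ℕ) < M) by omega), zero_mul])]
    refine Finset.sum_congr rfl fun k _ => ?_
    by_cases h : M₁ ≤ (k : ℕ)
    · simp [h, k.is_lt]
    · simp [h]
  have cZtot : (∑ j : Fin M, z j)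
      = (∑ i : Fin N, (if h : (i : ℕ) < M₁ then z ⟨i, h.trans hM₁M⟩ else 0))
        + ∑ i : Fin N, (if h : M₁ ≤ (i : ℕ) ∧ (i : ℕ) < M then z ⟨i, h.2⟩ else 0) := by
    rw [← Finset.sum_add_distrib]
    simp_rw [← hsplit]
    rw [sum_castLE hMN (fun i => if h : (i : ℕ) < M then z ⟨i, h⟩ else 0)
      (fun i hi => dif_neg (by omega))]
    refine Finset.sum_congr rfl fun k _ => ?_
    simp [k.is_lt]
  have hus : ∀ i : Fin N, u i.castSucc
      = y i.castSucc + ((if h : (i : ℕ) < M₁ then z ⟨i, h.trans hM₁M⟩ else 0)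
        + (if h : M₁ ≤ (i : ℕ) ∧ (i : ℕ) < M then z ⟨i, h.2⟩ else 0)) := by
    intro i
    rw [← hsplit i]
    by_cases h : (i : ℕ) < M
    · rw [hu1 i.castSucc (by simpa using h), dif_pos h]
      rfl
    · rw [hu2 i.castSucc (by simpa using not_lt.1 h) (by simp), dif_neg h, add_zero]
  -- block 1 : diagonal double sum
  have b1 : (∑ x : Fin N, ∑ x1 : Fin N, α x.castSucc.castSucc *
        (((if x = x1 then y x.castSucc else 0) + lapl N W x x1) * α x1.castSucc.castSucc))
      = (∑ x : Fin N, y x.castSucc * α x.castSucc.castSucc ^ 2)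
        + ∑ x : Fin N, ∑ x1 : Fin N,
            α x.castSucc.castSucc * lapl N W x x1 * α x1.castSucc.castSucc := by
    have expand : ∀ x x1 : Fin N, α x.castSucc.castSucc *
        (((if x = x1 then y x.castSucc else 0) + lapl N W x x1) * α x1.castSucc.castSucc)
        = (if x = x1 then y x.castSucc * (α x.castSucc.castSucc * α x1.castSucc.castSucc) else 0)
          + α x.castSucc.castSucc * lapl N W x x1 * α x1.castSucc.castSucc := by
      intro x x1
      rcases eq_or_ne x x1 with hx | hx
      · subst hx; rw [if_pos rfl, if_pos rfl]; ring
      · rw [if_neg hx, if_neg hx]; ring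
    simp_rw [expand, Finset.sum_add_distrib, Finset.sum_ite_eq, Finset.mem_univ, if_true]
    congr 1
    congr 1; ext x
    ring
  simp only [Finset.sum_add_distrib]
  rw [b1]
  simp only [lapl_quadform W hW hWdiag (fun i => α i.castSucc.castSucc)]
  rw [cS, cZ1, cZ2, hu3, cZtot]
  simp only [hus]
  -- pointwise reorderings
  have r2 : ∀ x : Fin N, α x.castSucc.castSucc *
      ((if h : (x : ℕ) < M₁ then z ⟨x, h.trans hM₁M⟩ else 0) * α (Fin.last N).castSucc)
      = ((if h : (x : ℕ) < M₁ then z ⟨x, h.trans hM₁M⟩ else 0) * α x.castSucc.castSucc)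
        * α (Fin.last N).castSucc := fun x => by ring
  have r3 : ∀ x : Fin N, α x.castSucc.castSucc *
      ((if h : M₁ ≤ (x : ℕ) ∧ (x : ℕ) < M then z ⟨x, h.2⟩ else 0) * α (Fin.last (N + 1)))
      = ((if h : M₁ ≤ (x : ℕ) ∧ (x : ℕ) < M then z ⟨x, h.2⟩ else 0) * α x.castSucc.castSucc)
        * α (Fin.last (N + 1)) := fun x => by ring
  have r4 : ∀ x : Fin N, α (Fin.last N).castSucc *
      ((if h : (x : ℕ) < M₁ then z ⟨x, h.trans hM₁M⟩ else 0) * α x.castSucc.castSucc)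
      = ((if h : (x : ℕ) < M₁ then z ⟨x, h.trans hM₁M⟩ else 0) * α x.castSucc.castSucc)
        * α (Fin.last N).castSucc := fun x => by ring
  have r7 : ∀ x : Fin N, α (Fin.last (N + 1)) *
      ((if h : M₁ ≤ (x : ℕ) ∧ (x : ℕ) < M then z ⟨x, h.2⟩ else 0) * α x.castSucc.castSucc)
      = ((if h : M₁ ≤ (x : ℕ) ∧ (x : ℕ) < M then z ⟨x, h.2⟩ else 0) * α x.castSucc.castSucc)
        * α (Fin.last (N + 1)) := fun x => by ring
  have q1 : ∀ x : Fin N, (if h : (x : ℕ) < M₁ then z ⟨x, h.trans hM₁M⟩ else 0)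
      * (α (Fin.last N).castSucc - α x.castSucc.castSucc) ^ 2
      = (if h : (x : ℕ) < M₁ then z ⟨x, h.trans hM₁M⟩ else 0) * α x.castSucc.castSucc ^ 2
        + (if h : (x : ℕ) < M₁ then z ⟨x, h.trans hM₁M⟩ else 0) * α (Fin.last N).castSucc ^ 2
        - (if h : (x : ℕ) < M₁ then z ⟨x, h.trans hM₁M⟩ else 0) * α x.castSucc.castSucc
          * (2 * α (Fin.last N).castSucc) := fun x => by ring
  have q2 : ∀ x : Fin N, (if h : M₁ ≤ (x : ℕ) ∧ (x : ℕ) < M then z ⟨x, h.2⟩ else 0)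
      * (α (Fin.last (N + 1)) - α x.castSucc.castSucc) ^ 2
      = (if h : M₁ ≤ (x : ℕ) ∧ (x : ℕ) < M then z ⟨x, h.2⟩ else 0) * α x.castSucc.castSucc ^ 2
        + (if h : M₁ ≤ (x : ℕ) ∧ (x : ℕ) < M then z ⟨x, h.2⟩ else 0) * α (Fin.last (N + 1)) ^ 2
        - (if h : M₁ ≤ (x : ℕ) ∧ (x : ℕ) < M then z ⟨x, h.2⟩ else 0) * α x.castSucc.castSucc
          * (2 * α (Fin.last (N + 1))) := fun x => by ring
  have q3 : ∀ x : Fin N,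
      (y x.castSucc + ((if h : (x : ℕ) < M₁ then z ⟨x, h.trans hM₁M⟩ else 0)
        + (if h : M₁ ≤ (x : ℕ) ∧ (x : ℕ) < M then z ⟨x, h.2⟩ else 0)))
        * α x.castSucc.castSucc ^ 2
      = y x.castSucc * α x.castSucc.castSucc ^ 2
        + (if h : (x : ℕ) < M₁ then z ⟨x, h.trans hM₁M⟩ else 0) * α x.castSucc.castSucc ^ 2
        + (if h : M₁ ≤ (x : ℕ) ∧ (x : ℕ) < M then z ⟨x, h.2⟩ else 0) * α x.castSucc.castSucc ^ 2
      := fun x => by ring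
  simp_rw [r2, r3, r4, r7, q1, q2, q3, Finset.sum_add_distrib, Finset.sum_sub_distrib,
    ← Finset.sum_mul]
  simp only [Finset.sum_add_distrib, Finset.sum_sub_distrib, ← Finset.sum_mul]
  ring
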